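/- arXiv:math/0703155 — 2 statements merged into one kernel-verified Lean document; each statement's English description precedes it below -/
import Mathlib

section
/- Quadratic doubling inequality for sup-convolutions: Let n₁, n₂ ≥ 1, let K be a nonempty set, and let w₁ : ℝ^{n₁}×K → ℝ and w₂ : ℝ^{n₂}×K → ℝ be bounded functions. Let A be a symmetric (n₁+n₂)×(n₁+n₂) real matrix, let ε > 0 and set λ = 1/ε + ‖A‖, where ‖A‖ is the operator norm. Assume that w₁(x',k) − w₂(y',k) ≤ ⟨A(x',y'),(x',y')⟩ for all (x',y',k) ∈ ℝ^{n₁}×ℝ^{n₂}×K. Then for all x,x' ∈ ℝ^{n₁}, all y,y' ∈ ℝ^{n₂} and all k ∈ K, one has w₁(x',k) − w₂(y',k) ≤ ⟨(A+εA²)(x,y),(x,y)⟩ + λ(|x'−x|² + |y'−y|²). -/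
open scoped RealInnerProductSpace
open Set Filter Topology

noncomputable section

abbrev Euc (n : ℕ) := EuclideanSpace ℝ (Fin n)

/-- Quadratic form of a matrix. -/
def quadF {m : Type*} [Fintype m] (A : Matrix m m ℝ) (x : m → ℝ) : ℝ :=
  ∑ i, ∑ j, A i j * x i * x j

/-- Operator norm of a matrix, acting on Euclidean space. -/
def opn {m : Type*} [Fintype m] [DecidableEq m] (A : Matrix m m ℝ) : ℝ :=
  ‖Matrix.toEuclideanCLM (𝕜 := ℝ) A‖

/-- Concatenation of two vectors. -/
def catv {n1 n2 : ℕ} (x : Euc n1) (y : Euc n2) : Fin n1 ⊕ Fin n2 → ℝ :=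
  Sum.elim (fun i => x i) (fun j => y j)

/-!
Let `T` be the symmetric operator of `A` on `ℝ^{n₁+n₂}`, `z = (x, y)` and `h = (x' - x, y' - y)`.
Then `⟪z + h, T (z + h)⟫ = ⟪z, T z⟫ + 2 ⟪h, T z⟫ + ⟪h, T h⟫`; Young's inequality bounds the
cross term by `ε ‖T z‖² + ‖h‖² / ε`, where `ε ‖T z‖² = ε ⟪z, T² z⟫`, and `⟪h, T h⟫ ≤ ‖T‖ ‖h‖²`.
The hypothesis at `(x', y')` finishes the proof.
-/

section SymmetricOperator

variable {E : Type*} [NormedAddCommGroup E] [InnerProductSpace ℝ E] {T : E →L[ℝ] E}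

theorem two_mul_real_inner_le_add_norm_sq {ε : ℝ} (hε : 0 < ε) (u v : E) :
    2 * ⟪u, v⟫ ≤ ε * ‖v‖ ^ 2 + 1 / ε * ‖u‖ ^ 2 := by
  have hsq : 0 ≤ (ε * ‖v‖ - ‖u‖) ^ 2 / ε := by positivity
  have hcs := real_inner_le_norm u v
  rw [sub_sq, div_eq_mul_inv] at hsq
  field_simp at hsq ⊢
  nlinarith

theorem LinearMap.IsSymmetric.inner_add_apply_add (hT : (T : E →ₗ[ℝ] E).IsSymmetric) (z h : E) :
    ⟪z + h, T (z + h)⟫ = ⟪z, T z⟫ + 2 * ⟪h, T z⟫ + ⟪h, T h⟫ := by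
  have hsymm : ⟪z, T h⟫ = ⟪h, T z⟫ := by
    rw [real_inner_comm]; exact hT h z
  simp only [map_add, inner_add_left, inner_add_right, hsymm]
  ring

theorem LinearMap.IsSymmetric.inner_add_smul_mul_self_apply (hT : (T : E →ₗ[ℝ] E).IsSymmetric)
    (ε : ℝ) (z : E) :
    ⟪z, (T + ε • (T * T)) z⟫ = ⟪z, T z⟫ + ε * ‖T z‖ ^ 2 := by
  have hsymm : ⟪z, T (T z)⟫ = ⟪T z, T z⟫ := (hT z (T z)).symm
  simp only [_root_.add_apply, _root_.smul_apply, mul_apply_eq_comp, inner_add_right,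
    real_inner_smul_right, hsymm, real_inner_self_eq_norm_sq]

theorem real_inner_apply_self_le (T : E →L[ℝ] E) (h : E) : ⟪h, T h⟫ ≤ ‖T‖ * ‖h‖ ^ 2 :=
  calc ⟪h, T h⟫ ≤ ‖h‖ * ‖T h‖ := real_inner_le_norm _ _
    _ ≤ ‖h‖ * (‖T‖ * ‖h‖) := by gcongr; exact T.le_opNorm h
    _ = ‖T‖ * ‖h‖ ^ 2 := by ring

theorem LinearMap.IsSymmetric.inner_add_apply_add_le (hT : (T : E →ₗ[ℝ] E).IsSymmetric)
    {ε : ℝ} (hε : 0 < ε) (z h : E) :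
    ⟪z + h, T (z + h)⟫ ≤ ⟪z, (T + ε • (T * T)) z⟫ + (1 / ε + ‖T‖) * ‖h‖ ^ 2 := by
  rw [hT.inner_add_apply_add, hT.inner_add_smul_mul_self_apply]
  nlinarith [two_mul_real_inner_le_add_norm_sq hε h (T z), real_inner_apply_self_le T h]

end SymmetricOperator

open Matrix WithLp

theorem quadF_eq_inner_toEuclideanCLM {m : Type*} [Fintype m] [DecidableEq m]
    (A : Matrix m m ℝ) (v : m → ℝ) :
    quadF A v = ⟪toLp 2 v, toEuclideanCLM (𝕜 := ℝ) A (toLp 2 v)⟫ := by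
  rw [inner_toEuclideanCLM]
  simp only [quadF, dotProduct, mulVec, Finset.mul_sum]
  exact Finset.sum_congr rfl fun i _ => Finset.sum_congr rfl fun j _ => by ring

theorem Matrix.IsSymm.isSymmetric_toEuclideanCLM {m : Type*} [Fintype m] [DecidableEq m]
    {A : Matrix m m ℝ} (hA : A.IsSymm) :
    (toEuclideanCLM (𝕜 := ℝ) A : EuclideanSpace ℝ m →ₗ[ℝ] EuclideanSpace ℝ m).IsSymmetric :=
  isSymmetric_toEuclideanLin_iff.mpr (isHermitian_iff_isSymm.mpr hA)

theorem toLp_catv_sub {n1 n2 : ℕ} (x x' : Euc n1) (y y' : Euc n2) :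
    toLp 2 (catv x' y') = toLp 2 (catv x y) + toLp 2 (catv (x' - x) (y' - y)) := by
  ext (i | j) <;> simp [catv]

theorem norm_toLp_catv_sq {n1 n2 : ℕ} (x : Euc n1) (y : Euc n2) :
    ‖toLp 2 (catv x y)‖ ^ 2 = ‖x‖ ^ 2 + ‖y‖ ^ 2 := by
  simp [EuclideanSpace.norm_sq_eq, Fintype.sum_sum_type, catv]

theorem quadratic_doubling_supconvolution_general {n1 n2 : ℕ}
    (K : Type*)
    (w1 : Euc n1 → K → ℝ) (w2 : Euc n2 → K → ℝ)
    (A : Matrix (Fin n1 ⊕ Fin n2) (Fin n1 ⊕ Fin n2) ℝ) (hA : A.IsSymm)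
    {ε : ℝ} (hε : 0 < ε)
    (hineq : ∀ (x' : Euc n1) (y' : Euc n2) (k : K),
        w1 x' k - w2 y' k ≤ quadF A (catv x' y')) :
    ∀ (x x' : Euc n1) (y y' : Euc n2) (k : K),
      w1 x' k - w2 y' k ≤
        quadF (A + ε • (A * A)) (catv x y)
          + (1 / ε + opn A) * (‖x' - x‖ ^ 2 + ‖y' - y‖ ^ 2) := by
  intro x x' y y' k
  have hdoubling := hA.isSymmetric_toEuclideanCLM.inner_add_apply_add_le hε
    (toLp 2 (catv x y)) (toLp 2 (catv (x' - x) (y' - y)))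
  rw [← toLp_catv_sub, norm_toLp_catv_sq, ← quadF_eq_inner_toEuclideanCLM] at hdoubling
  calc w1 x' k - w2 y' k ≤ quadF A (catv x' y') := hineq x' y' k
    _ ≤ quadF (A + ε • (A * A)) (catv x y)
          + (1 / ε + opn A) * (‖x' - x‖ ^ 2 + ‖y' - y‖ ^ 2) := by
      simpa only [quadF_eq_inner_toEuclideanCLM _ (catv x y), map_add, map_smul, map_mul, opn]
        using hdoubling

/-- **Quadratic doubling inequality for sup-convolutions** (step 1 of the proof of the
maximum principle). -/
theorem quadratic_doubling_supconvolution {n1 n2 : ℕ} (hn1 : 1 ≤ n1) (hn2 : 1 ≤ n2)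
    (K : Type*) [Nonempty K]
    (w1 : Euc n1 → K → ℝ) (w2 : Euc n2 → K → ℝ)
    (hw1 : ∃ M : ℝ, ∀ x k, |w1 x k| ≤ M) (hw2 : ∃ M : ℝ, ∀ y k, |w2 y k| ≤ M)
    (A : Matrix (Fin n1 ⊕ Fin n2) (Fin n1 ⊕ Fin n2) ℝ) (hA : A.IsSymm)
    {ε : ℝ} (hε : 0 < ε)
    (hineq : ∀ (x' : Euc n1) (y' : Euc n2) (k : K),
        w1 x' k - w2 y' k ≤ quadF A (catv x' y')) :
    ∀ (x x' : Euc n1) (y y' : Euc n2) (k : K),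
      w1 x' k - w2 y' k ≤
        quadF (A + ε • (A * A)) (catv x y)
          + (1 / ε + opn A) * (‖x' - x‖ ^ 2 + ‖y' - y‖ ^ 2) :=
  quadratic_doubling_supconvolution_general K w1 w2 A hA hε hineq

end
end

section
/- Expansivity of the gradient map at penalized maximum points: Let J ≥ 1, α > 0, let O ⊆ ℝ^J be an open convex set, and let h, g : O → ℝ with g concave. Let ζ₁, ζ₂ ∈ ℝ^J and q₁, q₂ ∈ O be such that, for k = 1,2, the function q' ↦ h(q') − g(q') + α|q'|² − ⟨ζ_k, q'⟩ attains its maximum over O at q_k, and assume that h and g are (Fréchet) differentiable at both q₁ and q₂. Then ⟨∇h(q₂) − ∇h(q₁), q₁ − q₂⟩ ≥ 2α|q₁ − q₂|²; in particular |q₁ − q₂| ≤ (1/(2α)) |∇h(q₁) − ∇h(q₂)|. -/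
open scoped RealInnerProductSpace
open Set Filter Topology

noncomputable section

/-! Testing each maximality condition at the other maximum point and adding gives
`⟪ζ₂ - ζ₁, q₁ - q₂⟫ ≥ 0`. The first-order conditions `∇h(q_k) - ∇g(q_k) + 2α q_k = ζ_k`, paired with
`q₁ - q₂` and subtracted, write `⟪∇h(q₂) - ∇h(q₁), q₁ - q₂⟫` as `2α‖q₁ - q₂‖²` plus that term plus
`⟪∇g(q₂) - ∇g(q₁), q₁ - q₂⟫`, which is nonnegative because the gradient of a concave function is
antitone. Cauchy–Schwarz turns the inequality into the distance bound. -/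

section Concave

variable {E : Type*} [NormedAddCommGroup E] [NormedSpace ℝ E]

theorem ConcaveOn.sub_le_fderiv_sub {s : Set E} {f : E → ℝ} (hf : ConcaveOn ℝ s f) {x y : E}
    (hx : x ∈ s) (hy : y ∈ s) (hfx : DifferentiableAt ℝ f x) :
    f y - f x ≤ fderiv ℝ f x (y - x) := by
  -- on the segment, the slope of a concave function is at most its derivative at the left end
  have hline : HasDerivAt (f ∘ AffineMap.lineMap (k := ℝ) x y) (fderiv ℝ f x (y - x)) 0 := by
    refine HasFDerivAt.comp_hasDerivAt (0 : ℝ) ?_ AffineMap.hasDerivAt_lineMap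
    simpa using hfx.hasFDerivAt
  simpa [slope] using
    (hf.comp_affineMap (AffineMap.lineMap (k := ℝ) x y)).slope_le_of_hasDerivAt (x := 0) (y := 1)
      (by simpa) (by simpa) zero_lt_one hline

theorem ConcaveOn.fderiv_apply_sub_le {s : Set E} {f : E → ℝ} (hf : ConcaveOn ℝ s f) {x y : E}
    (hx : x ∈ s) (hy : y ∈ s) (hfx : DifferentiableAt ℝ f x) (hfy : DifferentiableAt ℝ f y) :
    fderiv ℝ f x (x - y) ≤ fderiv ℝ f y (x - y) := by
  have hxy := hf.sub_le_fderiv_sub hx hy hfx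
  have hyx := hf.sub_le_fderiv_sub hy hx hfy
  rw [← neg_sub x y, map_neg] at hxy
  linarith

end Concave

section InnerProductSpace

variable {E : Type*} [NormedAddCommGroup E] [InnerProductSpace ℝ E]

theorem norm_le_of_mul_norm_sq_le_inner {c : ℝ} (hc : 0 < c) {x y : E} (h : c * ‖x‖ ^ 2 ≤ ⟪y, x⟫) :
    ‖x‖ ≤ (1 / c) * ‖y‖ := by
  rw [one_div_mul_eq_div, le_div_iff₀ hc]
  rcases (norm_nonneg x).eq_or_lt with hx | hx
  · rw [← hx, zero_mul]
    exact norm_nonneg y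
  · refine le_of_mul_le_mul_right ?_ hx
    nlinarith [real_inner_le_norm y x]

def penalized (f : E → ℝ) (α : ℝ) (ζ q : E) : ℝ := f q + α * ‖q‖ ^ 2 - ⟪ζ, q⟫

theorem inner_sub_sub_nonneg_of_isMaxOn_penalized {s : Set E} {f : E → ℝ} {α : ℝ}
    {ζ₁ ζ₂ q₁ q₂ : E} (h₁ : IsMaxOn (penalized f α ζ₁) s q₁)
    (h₂ : IsMaxOn (penalized f α ζ₂) s q₂) (hq₁ : q₁ ∈ s) (hq₂ : q₂ ∈ s) :
    0 ≤ ⟪ζ₂ - ζ₁, q₁ - q₂⟫ := by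
  have h₁₂ : penalized f α ζ₁ q₂ ≤ penalized f α ζ₁ q₁ := h₁ hq₂
  have h₂₁ : penalized f α ζ₂ q₁ ≤ penalized f α ζ₂ q₂ := h₂ hq₁
  simp only [penalized, inner_sub_left, inner_sub_right] at h₁₂ h₂₁ ⊢
  linarith

theorem IsLocalMax.fderiv_add_two_mul_inner_eq_of_penalized {f : E → ℝ} {α : ℝ} {ζ q : E}
    (hmax : IsLocalMax (penalized f α ζ) q) (hf : DifferentiableAt ℝ f q) (v : E) :
    fderiv ℝ f q v + 2 * α * ⟪q, v⟫ = ⟪ζ, v⟫ := by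
  have hderiv : HasFDerivAt (penalized f α ζ)
      (fderiv ℝ f q + α • 2 • innerSL ℝ q - innerSL ℝ ζ) q :=
    (hf.hasFDerivAt.add ((hasStrictFDerivAt_norm_sq q).hasFDerivAt.const_mul α)).sub
      (innerSL ℝ ζ).hasFDerivAt
  have := DFunLike.congr_fun (hmax.hasFDerivAt_eq_zero hderiv) v
  simp only [sub_apply, add_apply, smul_apply, innerSL_apply_apply, smul_eq_mul, nsmul_eq_mul,
    Nat.cast_ofNat, zero_apply] at this
  linarith

theorem two_mul_norm_sq_le_fderiv_sub_of_isMaxOn_penalized {s : Set E} (hs : IsOpen s)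
    {h g : E → ℝ} (hg : ConcaveOn ℝ s g) {α : ℝ} {ζ₁ ζ₂ q₁ q₂ : E} (hq₁ : q₁ ∈ s) (hq₂ : q₂ ∈ s)
    (hmax₁ : IsMaxOn (penalized (h - g) α ζ₁) s q₁)
    (hmax₂ : IsMaxOn (penalized (h - g) α ζ₂) s q₂)
    (hdh₁ : DifferentiableAt ℝ h q₁) (hdh₂ : DifferentiableAt ℝ h q₂)
    (hdg₁ : DifferentiableAt ℝ g q₁) (hdg₂ : DifferentiableAt ℝ g q₂) :
    2 * α * ‖q₁ - q₂‖ ^ 2 ≤ fderiv ℝ h q₂ (q₁ - q₂) - fderiv ℝ h q₁ (q₁ - q₂) := by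
  have hζ := inner_sub_sub_nonneg_of_isMaxOn_penalized hmax₁ hmax₂ hq₁ hq₂
  have hg' := hg.fderiv_apply_sub_le hq₁ hq₂ hdg₁ hdg₂
  have hstat₁ := (hmax₁.isLocalMax (hs.mem_nhds hq₁)).fderiv_add_two_mul_inner_eq_of_penalized
    (hdh₁.sub hdg₁) (q₁ - q₂)
  have hstat₂ := (hmax₂.isLocalMax (hs.mem_nhds hq₂)).fderiv_add_two_mul_inner_eq_of_penalized
    (hdh₂.sub hdg₂) (q₁ - q₂)
  rw [fderiv_sub hdh₁ hdg₁, sub_apply] at hstat₁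
  rw [fderiv_sub hdh₂ hdg₂, sub_apply] at hstat₂
  have hnorm : 2 * α * ⟪q₁, q₁ - q₂⟫ - 2 * α * ⟪q₂, q₁ - q₂⟫ = 2 * α * ‖q₁ - q₂‖ ^ 2 := by
    rw [← mul_sub, ← inner_sub_left, real_inner_self_eq_norm_sq]
  rw [inner_sub_left] at hζ
  linarith

end InnerProductSpace

theorem gradient_expansive_at_max_general {J : ℕ} {α : ℝ} (hα : 0 < α)
    (O : Set (Euc J)) (hOopen : IsOpen O)
    (h g : Euc J → ℝ) (hg : ConcaveOn ℝ O g)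
    (ζ1 ζ2 : Euc J) (q1 q2 : Euc J) (hq1 : q1 ∈ O) (hq2 : q2 ∈ O)
    (hmax1 : ∀ q' ∈ O,
      h q' - g q' + α * ‖q'‖ ^ 2 - ⟪ζ1, q'⟫ ≤ h q1 - g q1 + α * ‖q1‖ ^ 2 - ⟪ζ1, q1⟫)
    (hmax2 : ∀ q' ∈ O,
      h q' - g q' + α * ‖q'‖ ^ 2 - ⟪ζ2, q'⟫ ≤ h q2 - g q2 + α * ‖q2‖ ^ 2 - ⟪ζ2, q2⟫)
    (hdh1 : DifferentiableAt ℝ h q1) (hdh2 : DifferentiableAt ℝ h q2)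
    (hdg1 : DifferentiableAt ℝ g q1) (hdg2 : DifferentiableAt ℝ g q2) :
    2 * α * ‖q1 - q2‖ ^ 2 ≤ ⟪gradient h q2 - gradient h q1, q1 - q2⟫ ∧
    ‖q1 - q2‖ ≤ (1 / (2 * α)) * ‖gradient h q1 - gradient h q2‖ := by
  have hexpand : 2 * α * ‖q1 - q2‖ ^ 2 ≤ ⟪gradient h q2 - gradient h q1, q1 - q2⟫ := by
    rw [inner_sub_left, inner_gradient_left, inner_gradient_left]
    exact two_mul_norm_sq_le_fderiv_sub_of_isMaxOn_penalized hOopen hg hq1 hq2 hmax1 hmax2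
      hdh1 hdh2 hdg1 hdg2
  refine ⟨hexpand, ?_⟩
  rw [norm_sub_rev (gradient h q1)]
  exact norm_le_of_mul_norm_sq_le_inner (by positivity) hexpand

/-- **Expansivity of the gradient map at penalized maximum points** (step 3 of the proof of
the maximum principle): if `q' ↦ h(q') - g(q') + α|q'|² - ⟨ζ_k, q'⟩` attains its maximum over
the open convex set `O` at `q_k` (k = 1,2), with `g` concave, then the gradient map of `h`
expands distances by the factor `2α`. -/
theorem gradient_expansive_at_max {J : ℕ} (hJ : 1 ≤ J) {α : ℝ} (hα : 0 < α)
    (O : Set (Euc J)) (hOopen : IsOpen O) (hOconv : Convex ℝ O)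
    (h g : Euc J → ℝ) (hg : ConcaveOn ℝ O g)
    (ζ1 ζ2 : Euc J) (q1 q2 : Euc J) (hq1 : q1 ∈ O) (hq2 : q2 ∈ O)
    (hmax1 : ∀ q' ∈ O,
      h q' - g q' + α * ‖q'‖ ^ 2 - ⟪ζ1, q'⟫ ≤ h q1 - g q1 + α * ‖q1‖ ^ 2 - ⟪ζ1, q1⟫)
    (hmax2 : ∀ q' ∈ O,
      h q' - g q' + α * ‖q'‖ ^ 2 - ⟪ζ2, q'⟫ ≤ h q2 - g q2 + α * ‖q2‖ ^ 2 - ⟪ζ2, q2⟫)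
    (hdh1 : DifferentiableAt ℝ h q1) (hdh2 : DifferentiableAt ℝ h q2)
    (hdg1 : DifferentiableAt ℝ g q1) (hdg2 : DifferentiableAt ℝ g q2) :
    2 * α * ‖q1 - q2‖ ^ 2 ≤ ⟪gradient h q2 - gradient h q1, q1 - q2⟫ ∧
    ‖q1 - q2‖ ≤ (1 / (2 * α)) * ‖gradient h q1 - gradient h q2‖ :=
  gradient_expansive_at_max_general hα O hOopen h g hg ζ1 ζ2 q1 q2 hq1 hq2 hmax1 hmax2 hdh1 hdh2
    hdg1 hdg2

end
end
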